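/- Fix a free ultrafilter 𝒰 on ℕ, t ∈ [0,1], and θ = 2^t, and for each m ∈ ℕ let ν_{ω,m} : 𝒫(ℕ) → ℝ be the function such that for every A ⊆ ℕ the sequence n ↦ |A ∩ (⌊θ·2^{n−m−1}⌋, ⌊θ·2^{n−m}⌋]| / (θ·2^{n−m−1}) converges to ν_{ω,m}(A) along 𝒰. Then for all m ≠ m′, the charges ν_{ω,m} and ν_{ω,m′} are strongly singular: there exists D ⊆ ℕ with ν_{ω,m}(D) = 0 and ν_{ω,m′}(ℕ \ D) = 0. -/
import Mathlib

open Filter Topology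

noncomputable def auxDensity (t : ℝ) (m : ℕ) (A : Set ℕ) (n : ℕ) : ℝ :=
  (A ∩ Set.Ioc ⌊(2 : ℝ) ^ t * 2 ^ ((n : ℝ) - m - 1)⌋₊
      ⌊(2 : ℝ) ^ t * 2 ^ ((n : ℝ) - m)⌋₊).ncard /
    ((2 : ℝ) ^ t * 2 ^ ((n : ℝ) - m - 1))

lemma aux_disj (θ : ℝ) (hθ : 0 < θ) {x y : ℝ} (h : x + 1 ≤ y) :
    Disjoint (Set.Ioc ⌊θ * 2 ^ (x - 1)⌋₊ ⌊θ * 2 ^ x⌋₊)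
      (Set.Ioc ⌊θ * 2 ^ (y - 1)⌋₊ ⌊θ * 2 ^ y⌋₊) := by
  have hle : ⌊θ * 2 ^ x⌋₊ ≤ ⌊θ * 2 ^ (y - 1)⌋₊ := by
    apply Nat.floor_le_floor
    have : (2:ℝ) ^ x ≤ 2 ^ (y - 1) :=
      Real.rpow_le_rpow_of_exponent_le one_le_two (by linarith)
    nlinarith
  rw [Set.disjoint_left]
  rintro a ⟨_, ha2⟩ ⟨hb1, _⟩
  omega

lemma aux_residue (𝒰 : Ultrafilter ℕ) (c : ℕ) (hc : 0 < c) :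
    ∃ r, r < c ∧ {n : ℕ | n % c = r} ∈ 𝒰 := by
  have hmem : {k : ℕ | k < c} ∈ Ultrafilter.map (fun n => n % c) 𝒰 := by
    rw [Ultrafilter.mem_map]
    exact Filter.univ_mem' fun n => Nat.mod_lt n hc
  obtain ⟨r, hrS, hpure⟩ :=
    Ultrafilter.eq_pure_of_finite_mem (Set.finite_Iio c) hmem
  refine ⟨r, hrS, ?_⟩
  have : {r} ∈ Ultrafilter.map (fun n => n % c) 𝒰 := by
    rw [hpure]; exact Filter.mem_pure.mpr rfl
  rw [Ultrafilter.mem_map] at this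
  exact this

noncomputable def auxD (t : ℝ) (m' d r : ℕ) : Set ℕ :=
  ⋃ n', ⋃ (_ : n' % (2 * d) = r),
    Set.Ioc ⌊(2:ℝ) ^ t * 2 ^ ((n' : ℝ) - m' - 1)⌋₊ ⌊(2:ℝ) ^ t * 2 ^ ((n' : ℝ) - m')⌋₊

lemma aux_key (𝒰 : Ultrafilter ℕ) (t : ℝ) (νa : ℕ → Set ℕ → ℝ)
    (hνa : ∀ (m : ℕ) (A : Set ℕ),
      Tendsto (auxDensity t m A) (𝒰 : Filter ℕ) (𝓝 (νa m A)))
    (m m' : ℕ) (hmm : m < m') : ∃ D : Set ℕ, νa m D = 0 ∧ νa m' Dᶜ = 0 := by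
  have hθ : 0 < (2:ℝ) ^ t := Real.rpow_pos_of_pos two_pos t
  set d := m' - m with hd
  have hd0 : 0 < d := by omega
  obtain ⟨r, hr, hE⟩ := aux_residue 𝒰 (2 * d) (by omega)
  have hG : {n : ℕ | (n + d) % (2 * d) ≠ r} ∈ 𝒰 := by
    refine Filter.mem_of_superset hE ?_
    intro n hn
    simp only [Set.mem_setOf_eq] at hn ⊢
    intro hcon
    have hdvd : (2 * d : ℤ) ∣ ((n + d : ℕ) : ℤ) - (n : ℤ) := by
      have : (n + d) % (2 * d) = n % (2 * d) := by rw [hcon, hn]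
      exact (Nat.modEq_iff_dvd.mp this.symm)
    obtain ⟨k, hk⟩ := hdvd
    have hk' : (d : ℤ) = 2 * d * k := by push_cast at hk; linarith
    have hd0' : (0 : ℤ) < d := by exact_mod_cast hd0
    rcases le_or_gt k 0 with h | h
    · nlinarith
    · have h1 : (1:ℤ) ≤ k := h
      nlinarith
  refine ⟨auxD t m' d r, ?_, ?_⟩
  · refine tendsto_nhds_unique (hνa m _) ((tendsto_congr' ?_).mp tendsto_const_nhds)
    filter_upwards [hG] with n hn
    symm
    have hempty : auxD t m' d r ∩
        Set.Ioc ⌊(2:ℝ) ^ t * 2 ^ ((n : ℝ) - m - 1)⌋₊ ⌊(2:ℝ) ^ t * 2 ^ ((n : ℝ) - m)⌋₊ = ∅ := by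
      rw [Set.eq_empty_iff_forall_notMem]
      rintro a ⟨haD, haI⟩
      rw [auxD, Set.mem_iUnion₂] at haD
      obtain ⟨n', hn'E, han'⟩ := haD
      have hne2 : n' + m ≠ n + m' := by
        intro hcon
        exact hn (by rw [show n + d = n' from by omega]; exact hn'E)
      have hdisj : Disjoint
          (Set.Ioc ⌊(2:ℝ) ^ t * 2 ^ ((n' : ℝ) - m' - 1)⌋₊ ⌊(2:ℝ) ^ t * 2 ^ ((n' : ℝ) - m')⌋₊)
          (Set.Ioc ⌊(2:ℝ) ^ t * 2 ^ ((n : ℝ) - m - 1)⌋₊ ⌊(2:ℝ) ^ t * 2 ^ ((n : ℝ) - m)⌋₊) := by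
        rcases lt_or_gt_of_ne hne2 with h | h
        · refine aux_disj _ hθ ?_
          have : (n' : ℝ) + m + 1 ≤ n + m' := by exact_mod_cast h
          linarith
        · refine (aux_disj _ hθ ?_).symm
          have : (n : ℝ) + m' + 1 ≤ n' + m := by exact_mod_cast h
          linarith
      exact hdisj.ne_of_mem han' haI rfl
    rw [auxDensity, hempty]
    simp
  · refine tendsto_nhds_unique (hνa m' _) ((tendsto_congr' ?_).mp tendsto_const_nhds)
    filter_upwards [hE] with n hn
    symm
    have hempty : (auxD t m' d r)ᶜ ∩
        Set.Ioc ⌊(2:ℝ) ^ t * 2 ^ ((n : ℝ) - m' - 1)⌋₊ ⌊(2:ℝ) ^ t * 2 ^ ((n : ℝ) - m')⌋₊ = ∅ := by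
      rw [Set.eq_empty_iff_forall_notMem]
      rintro a ⟨haD, haI⟩
      exact haD (by rw [auxD, Set.mem_iUnion₂]; exact ⟨n, hn, haI⟩)
    rw [auxDensity, hempty]
    simp

/-- Distinct auxiliary charges `ν_{ω,m}` and `ν_{ω,m'}` are strongly singular:
some `D ⊆ ℕ` satisfies `ν_{ω,m}(D) = 0` and `ν_{ω,m'}(ℕ \ D) = 0`. -/
theorem auxCharges_stronglySingular
    (𝒰 : Ultrafilter ℕ) (hfree : (𝒰 : Filter ℕ) ≤ Filter.cofinite)
    (t : ℝ) (ht : t ∈ Set.Icc (0 : ℝ) 1)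
    (νa : ℕ → Set ℕ → ℝ)
    (hνa : ∀ (m : ℕ) (A : Set ℕ),
      Tendsto (auxDensity t m A) (𝒰 : Filter ℕ) (𝓝 (νa m A))) :
    ∀ m m' : ℕ, m ≠ m' → ∃ D : Set ℕ, νa m D = 0 ∧ νa m' Dᶜ = 0 := by
  intro m m' hne
  rcases lt_or_gt_of_ne hne with h | h
  · exact aux_key 𝒰 t νa hνa m m' h
  · obtain ⟨D, h1, h2⟩ := aux_key 𝒰 t νa hνa m' m h
    exact ⟨Dᶜ, h2, by rwa [compl_compl]⟩
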